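/- The (2,1)-quantum random access coding succeeds with probability cos²(π/8) = 1/2 + √2/4: for every x₁x₂ ∈ {0,1}², measuring |φ(x₁x₂)⟩ in the basis {|0⟩,|1⟩} yields x₁ with probability cos²(π/8), and measuring in the basis {|+⟩,|-⟩} yields x₂ with probability cos²(π/8). -/

import Mathlib

open Matrix Complex

/-- The angle of the (2,1) QRA coding state for source bits `x₁x₂`. -/
noncomputable def qraAngle : Fin 2 → Fin 2 → ℝ
  | 0, 0 => Real.pi / 8
  | 1, 0 => 3 * Real.pi / 8
  | 1, 1 => 5 * Real.pi / 8
  | 0, 1 => 7 * Real.pi / 8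

/-- The (2,1) QRA coding state `|φ(x₁x₂)⟩`. -/
noncomputable def phi (x₁ x₂ : Fin 2) : Fin 2 → ℂ :=
  ![(Real.cos (qraAngle x₁ x₂) : ℂ), (Real.sin (qraAngle x₁ x₂) : ℂ)]

/-- Computational basis `{|0⟩, |1⟩}`. -/
noncomputable def basisZ : Fin 2 → (Fin 2 → ℂ)
  | 0 => ![1, 0]
  | 1 => ![0, 1]

/-- Hadamard basis `{|+⟩, |-⟩}`. -/
noncomputable def basisX : Fin 2 → (Fin 2 → ℂ)
  | 0 => ![1 / (Real.sqrt 2 : ℂ), 1 / (Real.sqrt 2 : ℂ)]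
  | 1 => ![1 / (Real.sqrt 2 : ℂ), -(1 / (Real.sqrt 2 : ℂ))]

lemma qra_c7 : Real.cos (7 * Real.pi / 8) = -Real.cos (Real.pi / 8) := by
  rw [show 7 * Real.pi / 8 = Real.pi - Real.pi / 8 by ring, Real.cos_pi_sub]
lemma qra_s7 : Real.sin (7 * Real.pi / 8) = Real.sin (Real.pi / 8) := by
  rw [show 7 * Real.pi / 8 = Real.pi - Real.pi / 8 by ring, Real.sin_pi_sub]
lemma qra_c3 : Real.cos (3 * Real.pi / 8) = Real.sin (Real.pi / 8) := by
  rw [show 3 * Real.pi / 8 = Real.pi / 2 - Real.pi / 8 by ring, Real.cos_pi_div_two_sub]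
lemma qra_s3 : Real.sin (3 * Real.pi / 8) = Real.cos (Real.pi / 8) := by
  rw [show 3 * Real.pi / 8 = Real.pi / 2 - Real.pi / 8 by ring, Real.sin_pi_div_two_sub]
lemma qra_c5 : Real.cos (5 * Real.pi / 8) = -Real.sin (Real.pi / 8) := by
  rw [show 5 * Real.pi / 8 = Real.pi - 3 * Real.pi / 8 by ring, Real.cos_pi_sub, qra_c3]
lemma qra_s5 : Real.sin (5 * Real.pi / 8) = Real.cos (Real.pi / 8) := by
  rw [show 5 * Real.pi / 8 = Real.pi - 3 * Real.pi / 8 by ring, Real.sin_pi_sub, qra_s3]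

theorem qra_success_prob :
    (∀ x₁ x₂ : Fin 2,
      ‖star (basisZ x₁) ⬝ᵥ phi x₁ x₂‖ ^ 2 = Real.cos (Real.pi / 8) ^ 2 ∧
      ‖star (basisX x₂) ⬝ᵥ phi x₁ x₂‖ ^ 2 = Real.cos (Real.pi / 8) ^ 2) ∧
    Real.cos (Real.pi / 8) ^ 2 = 1 / 2 + Real.sqrt 2 / 4 := by
  have ha : Real.sqrt (2 + Real.sqrt 2) ^ 2 = 2 + Real.sqrt 2 :=
    Real.sq_sqrt (by positivity)
  have hb : Real.sqrt (2 - Real.sqrt 2) ^ 2 = 2 - Real.sqrt 2 := by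
    refine Real.sq_sqrt ?_
    nlinarith [Real.sq_sqrt (by norm_num : (2:ℝ) ≥ 0), Real.sqrt_nonneg 2]
  have hs : Real.sqrt 2 ^ 2 = 2 := Real.sq_sqrt (by norm_num)
  have hab : Real.sqrt (2 + Real.sqrt 2) * Real.sqrt (2 - Real.sqrt 2) = Real.sqrt 2 := by
    rw [← Real.sqrt_mul (by positivity)]
    congr 1
    nlinarith [Real.sq_sqrt (by norm_num : (2:ℝ) ≥ 0)]
  constructor
  · intro x₁ x₂
    fin_cases x₁ <;> fin_cases x₂ <;> constructor <;>
      simp [Complex.sq_norm, Complex.normSq_apply, phi, basisZ, basisX, qraAngle, dotProduct,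
        Fin.sum_univ_two, qra_c7, qra_s7, qra_c3, qra_s3, qra_c5, qra_s5,
        -Complex.ofReal_cos, -Complex.ofReal_sin,
        _root_.abs_of_nonneg (Real.sqrt_nonneg (2 + Real.sqrt 2))] <;>
      nlinarith [ha, hb, hs, hab, Real.sqrt_nonneg 2, Real.sqrt_nonneg (2 + Real.sqrt 2),
        Real.sqrt_nonneg (2 - Real.sqrt 2)]
  · rw [Real.cos_pi_div_eight]
    nlinarith [ha]
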